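/- arXiv:2203.14582 — 2 statements merged into one kernel-verified Lean document; each statement's English description precedes it below -/
import Mathlib

section
/- Let d, c be odd coprime positive integers. Then s(2c,d) + s(2d,c) = (4c² + 4d² + 1)/(24cd) - (1/8)(S₄(d,c) + S₄(c,d)) - 3/8. -/
open Finset

/-- The sawtooth function `((x))`. -/
noncomputable def sawtooth (x : ℝ) : ℝ := if (⌊x⌋ : ℝ) = x then 0 else x - ⌊x⌋ - 1/2

/-- The classical Dedekind sum `s(a,b)`. -/
noncomputable def dedekindS (a b : ℤ) : ℝ :=
  ∑ k ∈ Finset.Icc (1 : ℤ) (|b| - 1), sawtooth ((k : ℝ) / b) * sawtooth ((k * a : ℝ) / b)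

/-- The Hardy sum `S₄(d,c) = ∑_{k=1}^{c-1} (-1)^⌊kd/c⌋`. -/
noncomputable def hardyS4 (d c : ℤ) : ℤ :=
  ∑ k ∈ Finset.Icc (1 : ℤ) (c - 1), ((⌊(k * d : ℚ) / c⌋).negOnePow : ℤ)

/-!
Three identities combine linearly. Dedekind reciprocity
`s(a,b) + s(b,a) = -1/4 + (a² + b² + 1)/(12ab)` is applied to `(2c,d)`, `(2d,c)` and `(d,c)`;
it follows by writing `12b·s(a,b)` through the lattice sum `∑ k⌊ka/b⌋` and counting the
lattice points of `[1,b-1] × [1,a-1]` on either side of the diagonal. For odd `d` the Hardy sum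
satisfies `S₄(d,c) = 8s(d,2c) - 4s(d,c)`: for non-integral `x`, `(-1)^⌊x⌋ = 2((x)) - 4((x/2))`,
while pairing `k` with `k + c` in `s(d,2c)` and using `((y)) + ((y + 1/2)) = ((2y))` expresses
`s(d,2c)` through `s(d,c)` and `∑ ((kd/2c))`.
-/

lemma sawtooth_eq_ite_fract (x : ℝ) :
    sawtooth x = if Int.fract x = 0 then 0 else Int.fract x - 1 / 2 := by
  simp only [sawtooth, Int.fract, sub_eq_zero, eq_comm (a := x)]

lemma sawtooth_add_intCast (x : ℝ) (n : ℤ) : sawtooth (x + n) = sawtooth x := by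
  simp only [sawtooth_eq_ite_fract, Int.fract_add_intCast]

lemma sawtooth_neg (x : ℝ) : sawtooth (-x) = -sawtooth x := by
  simp only [sawtooth_eq_ite_fract, Int.fract_neg_eq_zero]
  split_ifs with h
  · simp
  · rw [Int.fract_neg h]; ring

lemma sawtooth_of_mem_Ioo {x : ℝ} (hx : x ∈ Set.Ioo 0 1) : sawtooth x = x - 1 / 2 := by
  rw [sawtooth_eq_ite_fract, Int.fract_eq_self.2 ⟨hx.1.le, hx.2⟩, if_neg hx.1.ne']

lemma floor_two_mul_of_fract_lt {y : ℝ} (h : Int.fract y < 1 / 2) :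
    ⌊2 * y⌋ = 2 * ⌊y⌋ := by
  rw [Int.floor_eq_iff]
  have := Int.fract_nonneg y
  constructor <;> push_cast <;> linarith [Int.floor_add_fract y]

lemma floor_two_mul_of_le_fract {y : ℝ} (h : 1 / 2 ≤ Int.fract y) :
    ⌊2 * y⌋ = 2 * ⌊y⌋ + 1 := by
  rw [Int.floor_eq_iff]
  have := Int.fract_lt_one y
  constructor <;> push_cast <;> linarith [Int.floor_add_fract y]

lemma fract_two_mul_of_fract_lt {y : ℝ} (h : Int.fract y < 1 / 2) :
    Int.fract (2 * y) = 2 * Int.fract y := by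
  rw [Int.fract, floor_two_mul_of_fract_lt h, Int.fract]; push_cast; ring

lemma fract_two_mul_of_le_fract {y : ℝ} (h : 1 / 2 ≤ Int.fract y) :
    Int.fract (2 * y) = 2 * Int.fract y - 1 := by
  rw [Int.fract, floor_two_mul_of_le_fract h, Int.fract]; push_cast; ring

lemma fract_add_half_of_fract_lt {y : ℝ} (h : Int.fract y < 1 / 2) :
    Int.fract (y + 1 / 2) = Int.fract y + 1 / 2 := by
  rw [Int.fract_eq_iff]
  refine ⟨by linarith [Int.fract_nonneg y], by linarith, ⌊y⌋, ?_⟩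
  linarith [Int.floor_add_fract y]

lemma fract_add_half_of_le_fract {y : ℝ} (h : 1 / 2 ≤ Int.fract y) :
    Int.fract (y + 1 / 2) = Int.fract y - 1 / 2 := by
  rw [Int.fract_eq_iff]
  refine ⟨by linarith, by linarith [Int.fract_lt_one y], ⌊y⌋ + 1, ?_⟩
  push_cast; linarith [Int.floor_add_fract y]

lemma sawtooth_add_sawtooth_add_half (x : ℝ) :
    sawtooth x + sawtooth (x + 1 / 2) = sawtooth (2 * x) := by
  have := Int.fract_nonneg x
  simp only [sawtooth_eq_ite_fract]
  rcases lt_or_ge (Int.fract x) (1 / 2) with h | h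
  · rw [fract_add_half_of_fract_lt h, fract_two_mul_of_fract_lt h]
    split_ifs <;> grind
  · rw [fract_add_half_of_le_fract h, fract_two_mul_of_le_fract h]
    split_ifs <;> grind

lemma negOnePow_floor_eq_sawtooth {x : ℝ} (hx : Int.fract x ≠ 0) :
    ((⌊x⌋.negOnePow : ℤ) : ℝ) = 2 * sawtooth x - 4 * sawtooth (x / 2) := by
  obtain ⟨y, rfl⟩ : ∃ y, x = 2 * y := ⟨x / 2, by ring⟩
  rw [mul_div_cancel_left₀ y two_ne_zero, sawtooth_eq_ite_fract, if_neg hx,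
    sawtooth_eq_ite_fract]
  rcases lt_or_ge (Int.fract y) (1 / 2) with h | h
  · rw [fract_two_mul_of_fract_lt h] at *
    rw [floor_two_mul_of_fract_lt h, Int.negOnePow_two_mul, if_neg (by simpa using hx)]
    norm_num; ring
  · rw [fract_two_mul_of_le_fract h] at *
    rw [floor_two_mul_of_le_fract h, Int.negOnePow_two_mul_add_one, if_neg (by linarith)]
    norm_num; ring

lemma sum_Icc_reflect {M : Type*} [AddCommMonoid M] (n : ℤ) (f : ℤ → M) :
    ∑ k ∈ Icc 1 (n - 1), f (n - k) = ∑ k ∈ Icc 1 (n - 1), f k :=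
  Finset.sum_nbij' (n - ·) (n - ·) (by intro k hk; simp only [mem_Icc] at *; omega)
    (by intro k hk; simp only [mem_Icc] at *; omega) (by intro k _; ring)
    (by intro k _; ring) (fun _ _ => rfl)

lemma sum_Icc_id_mul_two {n : ℤ} (hn : 0 ≤ n) : (∑ k ∈ Icc 1 n, k) * 2 = n * (n + 1) := by
  induction n, hn using Int.leInduction with
  | base => simp
  | succ n hn ih =>
    rw [← insert_Icc_right_eq_Icc_add_one (by omega), sum_insert (by simp), add_mul, ih]; ring

lemma sum_Icc_sq_mul_six {n : ℤ} (hn : 0 ≤ n) :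
    (∑ k ∈ Icc 1 n, k ^ 2) * 6 = n * (n + 1) * (2 * n + 1) := by
  induction n, hn using Int.leInduction with
  | base => simp
  | succ n hn ih =>
    rw [← insert_Icc_right_eq_Icc_add_one (by omega), sum_insert (by simp), add_mul, ih]; ring

lemma not_dvd_mul_of_isCoprime {a b k : ℤ} (hab : IsCoprime a b) (hk0 : 0 < k) (hkb : k < b) :
    ¬ b ∣ k * a := fun h => by
  have := Int.le_of_dvd hk0 (hab.symm.dvd_of_dvd_mul_right h)
  omega

lemma mul_emod_mem_Icc {a b k : ℤ} (hb : 0 < b) (hab : IsCoprime a b) (hk : k ∈ Icc 1 (b - 1)) :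
    k * a % b ∈ Icc 1 (b - 1) := by
  rw [mem_Icc] at hk ⊢
  have hne : k * a % b ≠ 0 := fun h =>
    not_dvd_mul_of_isCoprime hab (by omega) (by omega) (Int.dvd_of_emod_eq_zero h)
  have := Int.emod_nonneg (k * a) hb.ne'
  have := Int.emod_lt_of_pos (k * a) hb
  omega

lemma sum_Icc_mul_emod {M : Type*} [AddCommMonoid M] {a b : ℤ} (hb : 0 < b)
    (hab : IsCoprime a b) (g : ℤ → M) :
    ∑ k ∈ Icc 1 (b - 1), g (k * a % b) = ∑ k ∈ Icc 1 (b - 1), g k := by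
  have ⟨u, v, huv⟩ := hab
  have hu : IsCoprime u b := ⟨a, v, by linarith⟩
  have hinv : ∀ {x y : ℤ}, x * y ≡ 1 [ZMOD b] → ∀ k ∈ Icc 1 (b - 1), k * x % b * y % b = k := by
    intro x y hxy k hk
    rw [mem_Icc] at hk
    have : k * x % b * y ≡ k [ZMOD b] :=
      calc k * x % b * y ≡ k * x * y [ZMOD b] := (Int.mod_modEq _ _).mul_right y
        _ = k * (x * y) := mul_assoc ..
        _ ≡ k * 1 [ZMOD b] := hxy.mul_left k
        _ = k := mul_one k
    rw [this, Int.emod_eq_of_lt (by omega) (by omega)]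
  have hau : a * u ≡ 1 [ZMOD b] := (Int.modEq_iff_dvd.2 ⟨-v, by linarith⟩).symm
  exact Finset.sum_nbij' (· * a % b) (· * u % b) (fun k hk => mul_emod_mem_Icc hb hab hk)
    (fun k hk => mul_emod_mem_Icc hb hu hk) (hinv hau) (hinv (by rwa [mul_comm] at hau))
    (fun _ _ => rfl)

lemma fract_intCast_div_ne_zero {m b : ℤ} (hb : 0 < b) (h : ¬ b ∣ m) :
    Int.fract ((m : ℝ) / b) ≠ 0 := by
  lift b to ℕ using hb.le
  have hb' : (b : ℝ) ≠ 0 := by exact_mod_cast hb.ne'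
  rw [Int.cast_natCast, Int.fract_div_intCast_eq_div_intCast_mod]
  exact div_ne_zero (by exact_mod_cast fun h' => h (Int.dvd_of_emod_eq_zero h')) hb'

lemma sawtooth_intCast_div {m b : ℤ} (hb : 0 < b) (h : ¬ b ∣ m) :
    sawtooth ((m : ℝ) / b) = ((m % b : ℤ) : ℝ) / b - 1 / 2 := by
  rw [sawtooth_eq_ite_fract, if_neg (fract_intCast_div_ne_zero hb h)]
  lift b to ℕ using hb.le
  rw [Int.cast_natCast, Int.fract_div_intCast_eq_div_intCast_mod]

lemma sum_sawtooth_mul_div_eq_zero (a b : ℤ) :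
    ∑ k ∈ Icc 1 (b - 1), sawtooth ((k * a : ℝ) / b) = 0 := by
  have hreflect : ∀ k ∈ Icc 1 (b - 1),
      sawtooth (((b - k : ℤ) * a : ℝ) / b) = -sawtooth ((k * a : ℝ) / b) := by
    intro k hk
    have hb : (b : ℝ) ≠ 0 := by have := mem_Icc.1 hk; exact_mod_cast (by omega : b ≠ 0)
    rw [← sawtooth_neg, ← sawtooth_add_intCast (-_) a]
    congr 1
    push_cast
    field_simp
    ring
  have := sum_Icc_reflect b (fun k => sawtooth ((k * a : ℝ) / b))
  rw [sum_congr rfl hreflect, sum_neg_distrib] at this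
  linarith

lemma dedekindS_eq_sum_div_mul_sawtooth (a : ℤ) {b : ℤ} (hb : 0 < b) :
    dedekindS a b = ∑ k ∈ Icc 1 (b - 1), (k / b : ℝ) * sawtooth ((k * a : ℝ) / b) := by
  have hb' : (0 : ℝ) < b := by exact_mod_cast hb
  have hterm : ∀ k ∈ Icc 1 (b - 1), sawtooth ((k : ℝ) / b) * sawtooth ((k * a : ℝ) / b)
      = (k / b : ℝ) * sawtooth ((k * a : ℝ) / b) - 1 / 2 * sawtooth ((k * a : ℝ) / b) := by
    intro k hk
    have hk0 : (0 : ℝ) < k := by have := (mem_Icc.1 hk).1; exact_mod_cast (by omega : 0 < k)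
    have hkb : (k : ℝ) < b := by have := (mem_Icc.1 hk).2; exact_mod_cast (by omega : k < b)
    rw [sawtooth_of_mem_Ioo ⟨div_pos hk0 hb', (div_lt_one hb').2 hkb⟩]
    ring
  rw [dedekindS, abs_of_pos hb, sum_congr rfl hterm, sum_sub_distrib, ← mul_sum,
    sum_sawtooth_mul_div_eq_zero, mul_zero, sub_zero]

noncomputable def weightedFloorSum (a b : ℤ) : ℤ := ∑ k ∈ Icc 1 (b - 1), k * (k * a / b)

lemma dedekindS_eq_weightedFloorSum {a b : ℤ} (hb : 0 < b) (hab : IsCoprime a b) :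
    12 * b * dedekindS a b
      = 2 * a * (b - 1) * (2 * b - 1) - 3 * b * (b - 1) - 12 * (weightedFloorSum a b : ℝ) := by
  have hb' : (b : ℝ) ≠ 0 := by exact_mod_cast hb.ne'
  have hterm : ∀ k ∈ Icc 1 (b - 1), (k / b : ℝ) * sawtooth ((k * a : ℝ) / b)
      = a / b ^ 2 * (k : ℝ) ^ 2 - 1 / b * (k * (k * a / b : ℤ) : ℝ) - 1 / (2 * b) * k := by
    intro k hk
    rw [mem_Icc] at hk
    rw [show (k * a : ℝ) = ((k * a : ℤ) : ℝ) by push_cast; ring,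
      sawtooth_intCast_div hb (not_dvd_mul_of_isCoprime hab (by omega) (by omega)), Int.emod_def]
    push_cast
    field_simp
  have hsum1 := congrArg (Int.cast : ℤ → ℝ) (sum_Icc_id_mul_two (by omega : 0 ≤ b - 1))
  have hsum2 := congrArg (Int.cast : ℤ → ℝ) (sum_Icc_sq_mul_six (by omega : 0 ≤ b - 1))
  push_cast at hsum1 hsum2
  rw [dedekindS_eq_sum_div_mul_sawtooth a hb, sum_congr rfl hterm, sum_sub_distrib,
    sum_sub_distrib, ← mul_sum, ← mul_sum, ← mul_sum, weightedFloorSum]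
  push_cast
  field_simp
  linear_combination (4 * a) * hsum2 - 6 * b * hsum1

lemma filter_mul_le_eq_Icc {b m n : ℤ} (hb : 0 < b) (h : m / b ≤ n) :
    {j ∈ Icc 1 n | j * b ≤ m} = Icc 1 (m / b) := by
  ext j
  simp only [mem_filter, mem_Icc, ← Int.le_ediv_iff_mul_le hb]
  omega

lemma mul_ediv_mem_Icc {a b k : ℤ} (ha : 0 < a) (hb : 0 < b) (hk : k ∈ Icc 1 (b - 1)) :
    k * a / b ∈ Icc 0 (a - 1) := by
  rw [mem_Icc] at hk ⊢
  have : k * a / b < a := (Int.ediv_lt_iff_lt_mul hb).2 (by nlinarith)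
  exact ⟨Int.ediv_nonneg (by nlinarith) hb.le, by omega⟩

-- Double count `∑ 2j` over the lattice points `(k, j)` of `[1,b-1] × [1,a-1]`, split by the
-- diagonal `jb = ka`, which by coprimality contains none of them.
lemma sum_floor_mul_floor_add_one_add_two_mul_weightedFloorSum {a b : ℤ} (ha : 0 < a)
    (hb : 0 < b) (hab : IsCoprime a b) :
    ∑ k ∈ Icc 1 (b - 1), (k * a / b) * (k * a / b + 1) + 2 * weightedFloorSum b a
      = (b - 1) * ((a - 1) * a) := by
  have hbelow : ∀ k ∈ Icc 1 (b - 1),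
      ∑ j ∈ Icc 1 (a - 1) with j * b ≤ k * a, j * 2 = (k * a / b) * (k * a / b + 1) := by
    intro k hk
    have hq := mem_Icc.1 (mul_ediv_mem_Icc ha hb hk)
    rw [filter_mul_le_eq_Icc hb hq.2, ← sum_mul, sum_Icc_id_mul_two hq.1]
  have habove : ∀ j ∈ Icc 1 (a - 1),
      ∑ k ∈ Icc 1 (b - 1) with ¬ j * b ≤ k * a, j * 2 = 2 * (j * (j * b / a)) := by
    intro j hj
    have hp := mem_Icc.1 (mul_ediv_mem_Icc hb ha hj)
    have hoff_diagonal : ∀ k ∈ Icc 1 (b - 1), ¬ j * b ≤ k * a ↔ k * a ≤ j * b := by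
      intro k _
      have : k * a ≠ j * b := fun h => not_dvd_mul_of_isCoprime hab.symm
        (mem_Icc.1 hj).1 (by have := (mem_Icc.1 hj).2; omega) ⟨k, by linarith⟩
      omega
    rw [filter_congr hoff_diagonal, filter_mul_le_eq_Icc ha hp.2, sum_const, Int.card_Icc,
      nsmul_eq_mul, Int.toNat_of_nonneg (by omega)]
    ring
  have htotal :
      ∑ k ∈ Icc 1 (b - 1), ∑ j ∈ Icc 1 (a - 1), j * 2 = (b - 1) * ((a - 1) * a) := by
    rw [sum_const, Int.card_Icc, nsmul_eq_mul, Int.toNat_of_nonneg (by omega), ← sum_mul,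
      sum_Icc_id_mul_two (by omega)]
    ring
  rw [← htotal, ← sum_congr rfl hbelow, weightedFloorSum, mul_sum, ← sum_congr rfl habove]
  simp only [sum_filter]
  rw [sum_comm (s := Icc 1 (a - 1)), ← sum_add_distrib]
  refine sum_congr rfl fun k _ => ?_
  rw [← sum_add_distrib]
  exact sum_congr rfl fun j _ => by split_ifs <;> simp

-- `b⌊ka/b⌋ = ka - (ka mod b)`, and `k ↦ ka mod b` permutes `[1, b-1]`.
lemma sq_mul_sum_floor_mul_floor_add_one {a b : ℤ} (hb : 0 < b) (hab : IsCoprime a b) :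
    b ^ 2 * ∑ k ∈ Icc 1 (b - 1), (k * a / b) * (k * a / b + 1)
      = (1 - a ^ 2) * ∑ k ∈ Icc 1 (b - 1), k ^ 2 + 2 * a * b * weightedFloorSum a b
        + b * (a - 1) * ∑ k ∈ Icc 1 (b - 1), k := by
  have hterm : ∀ k : ℤ, b ^ 2 * ((k * a / b) * (k * a / b + 1))
      = (1 - a ^ 2) * k ^ 2 + 2 * a * b * (k * (k * a / b)) + b * (a - 1) * k
        + ((k * a % b) ^ 2 - k ^ 2) - b * (k * a % b - k) := by
    intro k; rw [Int.emod_def]; ring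
  have hr1 : ∑ k ∈ Icc 1 (b - 1), k * a % b = ∑ k ∈ Icc 1 (b - 1), k :=
    sum_Icc_mul_emod hb hab id
  have hr2 : ∑ k ∈ Icc 1 (b - 1), (k * a % b) ^ 2 = ∑ k ∈ Icc 1 (b - 1), k ^ 2 :=
    sum_Icc_mul_emod hb hab (· ^ 2)
  rw [mul_sum, sum_congr rfl fun k _ => hterm k]
  simp only [sum_add_distrib, sum_sub_distrib, ← mul_sum, hr1, hr2, weightedFloorSum]
  rw [← mul_sum]
  ring

theorem weightedFloorSum_reciprocity {a b : ℤ} (ha : 0 < a) (hb : 0 < b)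
    (hab : IsCoprime a b) :
    12 * (a * weightedFloorSum a b + b * weightedFloorSum b a)
      = (a - 1) * (b - 1) * (8 * a * b - a - b - 1) := by
  have hsq := sq_mul_sum_floor_mul_floor_add_one hb hab
  have hcount := sum_floor_mul_floor_add_one_add_two_mul_weightedFloorSum ha hb hab
  have h1 := sum_Icc_id_mul_two (by omega : 0 ≤ b - 1)
  have h2 := sum_Icc_sq_mul_six (by omega : 0 ≤ b - 1)
  refine mul_left_cancel₀ hb.ne' ?_
  linear_combination 6 * b ^ 2 * hcount - 6 * hsq - (1 - a ^ 2) * h2 - 3 * b * (a - 1) * h1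

theorem dedekindS_reciprocity {a b : ℤ} (ha : 0 < a) (hb : 0 < b) (hab : IsCoprime a b) :
    dedekindS a b + dedekindS b a = -1 / 4 + (a ^ 2 + b ^ 2 + 1) / (12 * a * b) := by
  have ha' : (a : ℝ) ≠ 0 := by exact_mod_cast ha.ne'
  have hb' : (b : ℝ) ≠ 0 := by exact_mod_cast hb.ne'
  have hab' := dedekindS_eq_weightedFloorSum hb hab
  have hba' := dedekindS_eq_weightedFloorSum ha hab.symm
  have hlattice : (12 * (a * weightedFloorSum a b + b * weightedFloorSum b a) : ℝ)
      = (a - 1) * (b - 1) * (8 * a * b - a - b - 1) := by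
    exact_mod_cast weightedFloorSum_reciprocity ha hb hab
  field_simp
  linear_combination 4 * a * hab' + 4 * b * hba' - 4 * hlattice

lemma sum_Icc_two_mul_sub_one {M : Type*} [AddCommMonoid M] {c : ℤ} (hc : 0 < c)
    (f : ℤ → M) :
    ∑ j ∈ Icc 1 (2 * c - 1), f j = ∑ k ∈ Icc 1 (c - 1), (f k + f (k + c)) + f c := by
  have hshift : ∑ j ∈ Icc (1 + c) (c - 1 + c), f j = ∑ k ∈ Icc 1 (c - 1), f (k + c) := by
    rw [← map_add_right_Icc, sum_map]; rfl
  have hsplit : Icc 1 (2 * c - 1) = Icc 1 (c - 1) ∪ insert c (Icc (1 + c) (c - 1 + c)) := by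
    ext j; simp only [mem_union, mem_insert, mem_Icc]; omega
  have hdisj : Disjoint (Icc 1 (c - 1)) (insert c (Icc (1 + c) (c - 1 + c))) := by
    rw [disjoint_left]; intro j; simp only [mem_insert, mem_Icc]; omega
  rw [hsplit, sum_union hdisj, sum_insert (by simp), hshift, sum_add_distrib]
  abel

lemma two_mul_dedekindS_two_mul_right {d c : ℤ} (hd : Odd d) (hc : 0 < c) :
    2 * dedekindS d (2 * c)
      = dedekindS d c - ∑ k ∈ Icc 1 (c - 1), sawtooth ((k * d : ℝ) / (2 * c)) := by
  obtain ⟨e, he⟩ := hd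
  have hc' : (c : ℝ) ≠ 0 := by exact_mod_cast hc.ne'
  have hhalf : (d : ℝ) / 2 = 1 / 2 + e := by rw [he]; push_cast; ring
  have hmiddle : (c : ℝ) / (2 * c) * sawtooth (c * d / (2 * c)) = 0 := by
    rw [show (c * d : ℝ) / (2 * c) = 1 / 2 + e by rw [← hhalf]; field_simp,
      sawtooth_add_intCast, sawtooth_of_mem_Ioo (by norm_num)]
    ring
  have hpair : ∀ k : ℤ, 2 * ((k : ℝ) / (2 * c) * sawtooth (k * d / (2 * c))
        + (k + c) / (2 * c) * sawtooth ((k + c) * d / (2 * c)))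
      = k / c * sawtooth (k * d / c) + sawtooth (k * d / c) - sawtooth (k * d / (2 * c)) := by
    intro k
    have hshift : ((k + c) * d : ℝ) / (2 * c) = k * d / (2 * c) + 1 / 2 + e := by
      rw [add_assoc, ← hhalf]; field_simp
    have hdouble : (k * d : ℝ) / c = 2 * (k * d / (2 * c)) := by field_simp
    rw [hshift, sawtooth_add_intCast, hdouble, ← sawtooth_add_sawtooth_add_half]
    field_simp
    ring
  rw [dedekindS_eq_sum_div_mul_sawtooth d (by omega : 0 < 2 * c), sum_Icc_two_mul_sub_one hc,
    dedekindS_eq_sum_div_mul_sawtooth d hc]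
  push_cast
  rw [mul_add, mul_sum, sum_congr rfl fun k _ => hpair k, hmiddle, mul_zero, add_zero,
    sum_sub_distrib, sum_add_distrib, sum_sawtooth_mul_div_eq_zero, add_zero]

lemma hardyS4_eq_sum_sawtooth {d c : ℤ} (hc : 0 < c) (hdc : IsCoprime d c) :
    (hardyS4 d c : ℝ) = -4 * ∑ k ∈ Icc 1 (c - 1), sawtooth ((k * d : ℝ) / (2 * c)) := by
  have hterm : ∀ k ∈ Icc 1 (c - 1), ((⌊(k * d : ℚ) / c⌋.negOnePow : ℤ) : ℝ)
      = 2 * sawtooth ((k * d : ℝ) / c) - 4 * sawtooth ((k * d : ℝ) / (2 * c)) := by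
    intro k hk
    rw [mem_Icc] at hk
    have hfract : Int.fract ((k * d : ℝ) / c) ≠ 0 := by
      rw [show (k * d : ℝ) = ((k * d : ℤ) : ℝ) by push_cast; ring]
      exact fract_intCast_div_ne_zero hc (not_dvd_mul_of_isCoprime hdc (by omega) (by omega))
    rw [← Rat.floor_cast (α := ℝ)]
    push_cast
    rw [negOnePow_floor_eq_sawtooth hfract, div_div, mul_comm (c : ℝ) 2]
  rw [hardyS4, Int.cast_sum, sum_congr rfl hterm, sum_sub_distrib, ← mul_sum, ← mul_sum,
    sum_sawtooth_mul_div_eq_zero]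
  ring

theorem hardyS4_eq_dedekindS {d c : ℤ} (hd : Odd d) (hc : 0 < c) (hdc : IsCoprime d c) :
    (hardyS4 d c : ℝ) = 8 * dedekindS d (2 * c) - 4 * dedekindS d c := by
  have := two_mul_dedekindS_two_mul_right hd hc
  rw [hardyS4_eq_sum_sawtooth hc hdc]
  linarith

/-- **Lemma 5.** For odd coprime positive integers `d, c`,
`s(2c,d) + s(2d,c) = (4c² + 4d² + 1)/(24cd) - (1/8)(S₄(d,c) + S₄(c,d)) - 3/8`. -/
theorem dedekind_hardy_both_odd (d c : ℤ) (hd : 0 < d) (hc : 0 < c)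
    (hdo : Odd d) (hco : Odd c) (hcop : Int.gcd d c = 1) :
    dedekindS (2 * c) d + dedekindS (2 * d) c
      = (4 * (c : ℝ) ^ 2 + 4 * (d : ℝ) ^ 2 + 1) / (24 * (c : ℝ) * d)
        - (1 / 8) * ((hardyS4 d c : ℝ) + (hardyS4 c d : ℝ)) - 3 / 8 := by
  have hdc : IsCoprime d c := Int.isCoprime_iff_gcd_eq_one.2 hcop
  have h2c : IsCoprime (2 * c) d := (Int.isCoprime_two_left.2 hdo).mul_left hdc.symm
  have h2d : IsCoprime (2 * d) c := (Int.isCoprime_two_left.2 hco).mul_left hdc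
  have r1 := dedekindS_reciprocity (by omega) hd h2c
  have r2 := dedekindS_reciprocity (by omega) hc h2d
  have r3 := dedekindS_reciprocity hd hc hdc
  rw [hardyS4_eq_dedekindS hdo hc hdc, hardyS4_eq_dedekindS hco hd hdc.symm]
  push_cast at r1 r2
  linear_combination r1 + r2 - r3 / 2
end

section
/- The Hardy sum function 𝔖 on Γ_θ, defined by 𝔖(A) = S(a,c) for A = (a *; c *) with c ≠ 0 and 𝔖(A) = 0 otherwise, satisfies: (1) 𝔖(S) = 𝔖(T) = 𝔖(I) = 0, (2) 𝔖(T^{2n}A) = 𝔖(A) for all n ∈ ℤ, (3) 𝔖(A) - 𝔖(SA) = sign(ac) for A = (a *; c *) ∈ Γ_θ; and 𝔖 is the unique function Γ_θ → ℤ satisfying these three properties. -/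
open Finset

/-- The Hardy sum `S(d,c) = ∑_{k=1}^{|c|-1} (-1)^{⌊kd/c⌋+k+1}`. -/
noncomputable def hardyS (d c : ℤ) : ℤ :=
  ∑ k ∈ Finset.Icc (1 : ℤ) (|c| - 1), ((⌊(k * d : ℚ) / c⌋ + k + 1).negOnePow : ℤ)

abbrev SL2Z := Matrix.SpecialLinearGroup (Fin 2) ℤ

/-- Membership in the theta group `Γ_θ`: `a ≡ d` and `b ≡ c (mod 2)`. -/
def inGammaTheta (A : SL2Z) : Prop :=
  A.1 0 0 % 2 = A.1 1 1 % 2 ∧ A.1 0 1 % 2 = A.1 1 0 % 2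

/-- `𝔖(A) = S(a,c)` for `A = (a b; c d)` with `c ≠ 0`, and `0` otherwise. -/
noncomputable def frakS (A : SL2Z) : ℤ :=
  if A.1 1 0 = 0 then 0 else hardyS (A.1 0 0) (A.1 1 0)

def Smat : SL2Z := ⟨!![0, -1; 1, 0], by norm_num [Matrix.det_fin_two_of]⟩
def Tmat : SL2Z := ⟨!![1, 1; 0, 1], by norm_num [Matrix.det_fin_two_of]⟩

/-!
Writing `(-1)^F = 1 + 2 ∑_{j=1}^{F} (-1)^j` for `F = ⌊kd/c⌋` turns `S(d,c)` into a signed count of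
the lattice points `(k, j)` of the box `[1, c-1] × [1, d-1]` below the line `j c = k d`. For
coprime `c, d > 0` no lattice point of the box lies on that line, so `S(d,c) + S(c,d)` counts the
whole box, which gives the reciprocity law `2 (S(d,c) + S(c,d)) = 1 - (-1)^(c+d)`. Together with
`S(-d,c) = -S(d,c)` this is property (3), since `a + c` is odd on `Γ_θ`; property (2) is the
`2c`-periodicity of `S(·,c)`.

For uniqueness, the difference of two solutions is invariant under `S` and `T^{2n}` on `Γ_θ`. As
`a` and `c` have opposite parity, some `T^{2n} A` has `|a + 2nc| < |c|`, so `S T^{2n} A` has a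
smaller lower-left entry; the descent ends at `± T^{2n}`, where the difference vanishes.
-/

theorem two_mul_sum_Icc_negOnePow {M : ℤ} (hM : 0 ≤ M) :
    2 * ∑ k ∈ Icc 1 M, (k.negOnePow : ℤ) = M.negOnePow - 1 := by
  induction M, hM using Int.leInduction with
  | base => simp
  | succ M hM ih =>
    rw [← insert_Icc_right_eq_Icc_add_one (by omega), sum_insert (by simp), mul_add, ih,
      Int.negOnePow_succ, Units.val_neg]
    ring

theorem negOnePow_eq_one_add_two_mul_sum {M : ℤ} (hM : 0 ≤ M) :
    (M.negOnePow : ℤ) = 1 + 2 * ∑ k ∈ Icc 1 M, (k.negOnePow : ℤ) := by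
  rw [two_mul_sum_Icc_negOnePow hM]; ring

theorem not_dvd_mul_of_isCoprime_s17 {c d k : ℤ} (hcop : IsCoprime c d) (hk : 0 < k) (hkc : k < |c|) :
    ¬ c ∣ k * d := fun hdvd ↦ by
  have := Int.le_of_dvd hk ((abs_dvd c k).2 (hcop.dvd_of_dvd_mul_right hdvd))
  omega

theorem hardyS_of_abs_le_one (d : ℤ) {c : ℤ} (hc : |c| ≤ 1) : hardyS d c = 0 := by
  rw [hardyS, Icc_eq_empty (by omega), sum_empty]

theorem hardyS_add_two_mul_mul_self (d c n : ℤ) : hardyS (d + 2 * n * c) c = hardyS d c := by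
  rcases eq_or_ne c 0 with rfl | hc
  · simp [hardyS_of_abs_le_one]
  refine sum_congr rfl fun k _ ↦ ?_
  have : (k * (d + 2 * n * c : ℤ) : ℚ) / c = (k * d : ℚ) / c + (2 * (n * k) : ℤ) := by
    push_cast; field_simp
  rw [this, Int.floor_add_intCast, add_right_comm _ _ k, add_right_comm _ _ (1 : ℤ),
    Int.negOnePow_add, Int.negOnePow_even _ (even_two_mul _), mul_one]

theorem hardyS_neg_right (d c : ℤ) : hardyS d (-c) = hardyS (-d) c := by
  simp only [hardyS, abs_neg, Int.cast_neg, mul_neg, div_neg, neg_div]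

theorem hardyS_of_pos (d : ℤ) {c : ℤ} (hc : 0 < c) :
    hardyS d c = ∑ k ∈ Icc 1 (c - 1), ((k * d / c + k + 1).negOnePow : ℤ) := by
  lift c to ℕ using hc.le
  refine sum_congr (by rw [abs_of_pos hc]) fun k _ ↦ ?_
  rw [← Rat.floor_intCast_div_natCast]
  push_cast; rfl

theorem hardyS_neg_left {c d : ℤ} (hcop : IsCoprime c d) : hardyS (-d) c = -hardyS d c := by
  wlog hc : 0 < c generalizing c d
  · rcases eq_or_lt_of_le (not_lt.1 hc) with rfl | hc
    · simp [hardyS_of_abs_le_one]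
    have := this hcop.neg_left (neg_pos.2 hc)
    rw [hardyS_neg_right, hardyS_neg_right, neg_neg] at this
    linarith
  rw [hardyS_of_pos _ hc, hardyS_of_pos _ hc, ← sum_neg_distrib]
  refine sum_congr rfl fun k hk ↦ ?_
  rw [mem_Icc] at hk
  have hndvd := not_dvd_mul_of_isCoprime_s17 (k := k) hcop (by omega) (by rw [abs_of_pos hc]; omega)
  rw [mul_neg, Int.neg_ediv, if_neg hndvd, Int.sign_eq_one_of_pos hc,
    show -(k * d / c) - 1 + k + 1 = (k * d / c + k + 1) + (-2 * (k * d / c) - 1) by ring,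
    Int.negOnePow_add, Int.negOnePow_odd (-2 * (k * d / c) - 1) ⟨-(k * d / c) - 1, by ring⟩]
  simp

theorem Icc_one_mul_ediv_eq_filter {c d k : ℤ} (hc : 0 < c) (hd : 0 < d) (hcop : IsCoprime c d)
    (hk : 0 < k) (hkc : k < c) :
    Icc 1 (k * d / c) = {j ∈ Icc 1 (d - 1) | j * c < k * d} := by
  have hndvd := not_dvd_mul_of_isCoprime_s17 (k := k) hcop hk (by rwa [abs_of_pos hc])
  ext j
  simp only [mem_Icc, mem_filter, Int.le_ediv_iff_mul_le hc]
  constructor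
  · rintro ⟨hj, hjc⟩
    have hlt : j * c < k * d := lt_of_le_of_ne hjc fun h ↦ hndvd ⟨j, by rw [← h, mul_comm]⟩
    have : j < d := lt_of_mul_lt_mul_right (hlt.trans (by nlinarith)) hc.le
    exact ⟨⟨hj, by omega⟩, hlt⟩
  · rintro ⟨⟨hj, -⟩, hlt⟩
    exact ⟨hj, hlt.le⟩

theorem hardyS_eq_sum_add_two_mul_sum_lattice {c d : ℤ} (hc : 0 < c) (hd : 0 < d)
    (hcop : IsCoprime c d) :
    hardyS d c = ∑ k ∈ Icc 1 (c - 1), ((k + 1).negOnePow : ℤ) +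
      2 * ∑ k ∈ Icc 1 (c - 1), ∑ j ∈ Icc 1 (d - 1),
        if j * c < k * d then ((k + 1).negOnePow * j.negOnePow : ℤ) else 0 := by
  rw [hardyS_of_pos _ hc, mul_sum, ← sum_add_distrib]
  refine sum_congr rfl fun k hk ↦ ?_
  rw [mem_Icc] at hk
  rw [add_assoc, Int.negOnePow_add, Units.val_mul,
    negOnePow_eq_one_add_two_mul_sum (Int.ediv_nonneg (by nlinarith) hc.le),
    Icc_one_mul_ediv_eq_filter hc hd hcop (by omega) (by omega), ← sum_filter, ← mul_sum]
  ring

theorem two_mul_hardyS_add_hardyS {c d : ℤ} (hc : 0 < c) (hd : 0 < d) (hcop : IsCoprime c d) :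
    2 * (hardyS d c + hardyS c d) = 1 - (c + d).negOnePow := by
  have hSc := hardyS_eq_sum_add_two_mul_sum_lattice hc hd hcop
  have hSd := hardyS_eq_sum_add_two_mul_sum_lattice hd hc hcop.symm
  rw [sum_comm] at hSd
  have hX := two_mul_sum_Icc_negOnePow (M := c - 1) (by omega)
  have hY := two_mul_sum_Icc_negOnePow (M := d - 1) (by omega)
  set X := ∑ k ∈ Icc 1 (c - 1), (k.negOnePow : ℤ)
  set Y := ∑ j ∈ Icc 1 (d - 1), (j.negOnePow : ℤ)
  have hshift (M : ℤ) :
      ∑ k ∈ Icc 1 M, ((k + 1).negOnePow : ℤ) = -∑ k ∈ Icc 1 M, (k.negOnePow : ℤ) := by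
    simp only [Int.negOnePow_succ, Units.val_neg, sum_neg_distrib]
  have hcross : (∑ k ∈ Icc 1 (c - 1), ∑ j ∈ Icc 1 (d - 1),
        if j * c < k * d then ((k + 1).negOnePow * j.negOnePow : ℤ) else 0) +
      (∑ k ∈ Icc 1 (c - 1), ∑ j ∈ Icc 1 (d - 1),
        if k * d < j * c then ((j + 1).negOnePow * k.negOnePow : ℤ) else 0) = -(X * Y) := by
    rw [← sum_add_distrib, sum_mul_sum, ← sum_neg_distrib]
    refine sum_congr rfl fun k hk ↦ ?_
    rw [← sum_add_distrib, ← sum_neg_distrib]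
    refine sum_congr rfl fun j hj ↦ ?_
    rw [mem_Icc] at hk hj
    have hne : j * c ≠ k * d := fun h ↦
      not_dvd_mul_of_isCoprime_s17 (k := k) hcop (by omega) (by rw [abs_of_pos hc]; omega)
        ⟨j, by rw [← h, mul_comm]⟩
    simp only [Int.negOnePow_succ, Units.val_neg]
    rcases hne.lt_or_gt with h | h
    · rw [if_pos h, if_neg h.not_gt]; ring
    · rw [if_neg h.not_gt, if_pos h]; ring
  have hpow : ((c - 1).negOnePow * (d - 1).negOnePow : ℤ) = (c + d).negOnePow := by
    rw [← Units.val_mul, ← Int.negOnePow_add, (Int.negOnePow_eq_iff _ (c + d)).2 ⟨-1, by ring⟩]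
  rw [hshift] at hSc hSd
  linear_combination 2 * hSc + 2 * hSd + 4 * hcross - (2 * Y + 1) * hX -
    ((c - 1).negOnePow : ℤ) * hY - hpow

theorem hardyS_add_hardyS_neg_left {a c : ℤ} (hcop : IsCoprime a c) :
    hardyS (-a) c + hardyS c (-a) = -(hardyS a c + hardyS c a) := by
  rw [hardyS_neg_left hcop.symm, hardyS_neg_right, hardyS_neg_left hcop]
  ring

theorem hardyS_add_hardyS_eq_sign {a c : ℤ} (hcop : IsCoprime a c) (hodd : Odd (a + c)) :
    hardyS a c + hardyS c a = (a * c).sign := by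
  rw [Int.odd_iff] at hodd
  wlog ha : 0 ≤ a generalizing a c
  · have := this hcop.neg_left (by omega) (by omega)
    rw [hardyS_add_hardyS_neg_left hcop, neg_mul, Int.sign_neg] at this
    linarith
  wlog hc : 0 ≤ c generalizing a c
  · have := this hcop.neg_right (by omega) ha (by omega)
    rw [add_comm, hardyS_add_hardyS_neg_left hcop.symm, mul_neg, Int.sign_neg] at this
    linarith
  rcases ha.eq_or_lt with rfl | ha
  · obtain rfl | rfl := Int.isUnit_iff.1 (isCoprime_zero_left.1 hcop) <;>
      simp [hardyS_of_abs_le_one]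
  rcases hc.eq_or_lt with rfl | hc
  · obtain rfl | rfl := Int.isUnit_iff.1 (isCoprime_zero_right.1 hcop) <;>
      simp [hardyS_of_abs_le_one]
  have := two_mul_hardyS_add_hardyS hc ha hcop.symm
  rw [add_comm c, Int.negOnePow_odd _ (Int.odd_iff.2 hodd), Units.val_neg, Units.val_one] at this
  rw [Int.sign_eq_one_of_pos (mul_pos ha hc)]
  omega

theorem exists_abs_add_two_mul_mul_lt {a c : ℤ} (hc : c ≠ 0) (hodd : Odd (a + c)) :
    ∃ n : ℤ, |a + 2 * n * c| < |c| := by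
  -- `a + 2nc = r - |c|` with `r = (a + |c|) % 2c` odd, hence `0 < r < 2|c|`
  refine ⟨-((a + |c|) / (2 * c)), ?_⟩
  have hdiv := Int.mul_ediv_add_emod (a + |c|) (2 * c)
  have hr0 := Int.emod_nonneg (a + |c|) (b := 2 * c) (by omega)
  have hr := Int.emod_lt (a + |c|) (b := 2 * c) (by omega)
  rw [Int.odd_iff] at hodd
  rw [mul_assoc] at hdiv
  rw [show a + 2 * -((a + |c|) / (2 * c)) * c = a - 2 * (c * ((a + |c|) / (2 * c))) by ring]
  generalize c * ((a + |c|) / (2 * c)) = m at *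
  generalize (a + |c|) % (2 * c) = r at *
  rw [abs_lt, Int.abs_eq_natAbs] at *
  omega

theorem coe_Smat_mul (A : SL2Z) :
    (Smat * A).1 = !![-A.1 1 0, -A.1 1 1; A.1 0 0, A.1 0 1] := by
  rw [Matrix.SpecialLinearGroup.coe_mul]
  ext i j
  fin_cases i <;> fin_cases j <;> simp [Smat, Matrix.mul_apply, Fin.sum_univ_two]

theorem coe_Tmat_zpow (n : ℤ) : (Tmat ^ n).1 = !![1, n; 0, 1] :=
  ModularGroup.coe_T_zpow n

theorem coe_Tmat_zpow_mul (n : ℤ) (A : SL2Z) :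
    (Tmat ^ n * A).1 = !![A.1 0 0 + n * A.1 1 0, A.1 0 1 + n * A.1 1 1; A.1 1 0, A.1 1 1] := by
  ext i j
  fin_cases i <;> fin_cases j <;> simp [coe_Tmat_zpow, Matrix.mul_apply, Fin.sum_univ_two]

theorem Smat_mul_Smat_mul (A : SL2Z) : Smat * (Smat * A) = -A := by
  refine Subtype.ext ?_
  rw [coe_Smat_mul, coe_Smat_mul, Matrix.SpecialLinearGroup.coe_neg]
  ext i j
  fin_cases i <;> fin_cases j <;> simp

theorem inGammaTheta_one : inGammaTheta 1 := by
  simp [inGammaTheta]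

theorem inGammaTheta.Smat_mul {A : SL2Z} (hA : inGammaTheta A) : inGammaTheta (Smat * A) := by
  simp only [inGammaTheta, coe_Smat_mul, Matrix.of_apply, Matrix.cons_val_zero,
    Matrix.cons_val_one] at hA ⊢
  omega

theorem inGammaTheta.Tmat_zpow_two_mul_mul {A : SL2Z} (hA : inGammaTheta A) (n : ℤ) :
    inGammaTheta (Tmat ^ (2 * n) * A) := by
  simp only [inGammaTheta, coe_Tmat_zpow_mul] at hA ⊢
  simp [mul_assoc, Int.add_mul_emod_self_left, hA]

theorem inGammaTheta.odd_add {A : SL2Z} (hA : inGammaTheta A) : Odd (A.1 0 0 + A.1 1 0) := by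
  have hdet : (A.1 0 0 * A.1 1 1 - A.1 0 1 * A.1 1 0) % 2 = 1 := by
    rw [← Matrix.det_fin_two, A.det_coe]; rfl
  rw [Int.sub_emod, Int.mul_emod, Int.mul_emod (A.1 0 1), ← hA.1, hA.2] at hdet
  rw [Int.odd_iff]
  rcases Int.emod_two_eq_zero_or_one (A.1 0 0) with h | h <;>
    rcases Int.emod_two_eq_zero_or_one (A.1 1 0) with h' | h' <;> simp [h, h'] at hdet <;> omega

theorem inGammaTheta.exists_eq_Tmat_zpow_two_mul {A : SL2Z} (hA : inGammaTheta A)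
    (hc : A.1 1 0 = 0) : ∃ n : ℤ, A = Tmat ^ (2 * n) ∨ A = -Tmat ^ (2 * n) := by
  have had : A.1 0 0 * A.1 1 1 = 1 := by
    have := A.det_coe
    rw [Matrix.det_fin_two, hc] at this
    simpa using this
  have hb : A.1 0 1 % 2 = 0 := by rw [hA.2, hc]; rfl
  have hb2 : 2 * (A.1 0 1 / 2) = A.1 0 1 := Int.mul_ediv_cancel' (Int.dvd_of_emod_eq_zero hb)
  rcases Int.eq_one_or_neg_one_of_mul_eq_one' had with ⟨ha, hd⟩ | ⟨ha, hd⟩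
  · refine ⟨A.1 0 1 / 2, Or.inl ?_⟩
    ext i j
    fin_cases i <;> fin_cases j <;> simp [coe_Tmat_zpow, ha, hc, hd, hb2]
  · refine ⟨-(A.1 0 1 / 2), Or.inr ?_⟩
    ext i j
    fin_cases i <;> fin_cases j <;> simp [coe_Tmat_zpow, ha, hc, hd, hb2]

theorem frakS_eq_hardyS (A : SL2Z) : frakS A = hardyS (A.1 0 0) (A.1 1 0) := by
  unfold frakS
  split_ifs with hc
  · rw [hc, hardyS_of_abs_le_one _ (by simp)]
  · rfl

theorem frakS_Smat : frakS Smat = 0 :=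
  (frakS_eq_hardyS _).trans (hardyS_of_abs_le_one _ (by simp [Smat]))

theorem frakS_Tmat : frakS Tmat = 0 :=
  (frakS_eq_hardyS _).trans (hardyS_of_abs_le_one _ (by simp [Tmat]))

theorem frakS_one : frakS 1 = 0 :=
  (frakS_eq_hardyS _).trans (hardyS_of_abs_le_one _ (by simp))

theorem frakS_Tmat_zpow_two_mul_mul (n : ℤ) (A : SL2Z) :
    frakS (Tmat ^ (2 * n) * A) = frakS A := by
  simp only [frakS_eq_hardyS, coe_Tmat_zpow_mul, Matrix.of_apply, Matrix.cons_val_zero,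
    Matrix.cons_val_one]
  exact hardyS_add_two_mul_mul_self _ _ n

theorem frakS_sub_frakS_Smat_mul {A : SL2Z} (hA : inGammaTheta A) :
    frakS A - frakS (Smat * A) = (A.1 0 0 * A.1 1 0).sign := by
  have hcop : IsCoprime (A.1 0 0) (A.1 1 0) := A.isCoprime_col 0
  simp only [frakS_eq_hardyS, coe_Smat_mul, Matrix.of_apply, Matrix.cons_val_zero,
    Matrix.cons_val_one]
  rw [hardyS_neg_left hcop, sub_neg_eq_add]
  exact hardyS_add_hardyS_eq_sign hcop hA.odd_add

theorem inGammaTheta.apply_eq_apply_one {α : Type*} {g : SL2Z → α}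
    (hT : ∀ (n : ℤ) (A : SL2Z), inGammaTheta A → g (Tmat ^ (2 * n) * A) = g A)
    (hS : ∀ A : SL2Z, inGammaTheta A → g (Smat * A) = g A) {A : SL2Z} (hA : inGammaTheta A) :
    g A = g 1 := by
  induction hN : (A.1 1 0).natAbs using Nat.strong_induction_on generalizing A with
  | _ N ih =>
  rcases eq_or_ne (A.1 1 0) 0 with hc | hc
  · have hTpow (n : ℤ) : g (Tmat ^ (2 * n)) = g 1 := by
      simpa using hT n 1 inGammaTheta_one
    obtain ⟨n, rfl | rfl⟩ := hA.exists_eq_Tmat_zpow_two_mul hc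
    · exact hTpow n
    · have hTmem : inGammaTheta (Tmat ^ (2 * n)) := by
        simpa using inGammaTheta_one.Tmat_zpow_two_mul_mul n
      rw [← Smat_mul_Smat_mul, hS _ hTmem.Smat_mul, hS _ hTmem, hTpow]
  obtain ⟨n, hn⟩ := exists_abs_add_two_mul_mul_lt hc hA.odd_add
  have hB := hA.Tmat_zpow_two_mul_mul n
  rw [← hT n A hA, ← hS _ hB]
  refine ih _ ?_ hB.Smat_mul rfl
  simp only [coe_Smat_mul, coe_Tmat_zpow_mul, Matrix.of_apply, Matrix.cons_val_zero,
    Matrix.cons_val_one]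
  rw [Int.abs_eq_natAbs, Int.abs_eq_natAbs] at hn
  omega

/-- **Characterization of the Hardy sum function `𝔖` on `Γ_θ`.** It satisfies
(1) `𝔖(S) = 𝔖(T) = 𝔖(I) = 0`, (2) `𝔖(T^{2n}A) = 𝔖(A)`, (3) `𝔖(A) - 𝔖(SA) = sign(ac)`,
and it is the unique function `Γ_θ → ℤ` with these three properties. -/
theorem frakS_characterization :
    (frakS Smat = 0 ∧ frakS Tmat = 0 ∧ frakS 1 = 0) ∧
    (∀ (n : ℤ) (A : SL2Z), inGammaTheta A → frakS (Tmat ^ (2 * n) * A) = frakS A) ∧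
    (∀ A : SL2Z, inGammaTheta A →
      frakS A - frakS (Smat * A) = Int.sign (A.1 0 0 * A.1 1 0)) ∧
    (∀ f : SL2Z → ℤ,
      (f Smat = 0 ∧ f Tmat = 0 ∧ f 1 = 0) →
      (∀ (n : ℤ) (A : SL2Z), inGammaTheta A → f (Tmat ^ (2 * n) * A) = f A) →
      (∀ A : SL2Z, inGammaTheta A →
        f A - f (Smat * A) = Int.sign (A.1 0 0 * A.1 1 0)) →
      ∀ A : SL2Z, inGammaTheta A → f A = frakS A) := by
  refine ⟨⟨frakS_Smat, frakS_Tmat, frakS_one⟩, fun n A _ ↦ frakS_Tmat_zpow_two_mul_mul n A,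
    fun A ↦ frakS_sub_frakS_Smat_mul, fun f ⟨_, _, hf1⟩ hfT hfS A hA ↦ ?_⟩
  have hdiff : f A - frakS A = f 1 - frakS 1 :=
    hA.apply_eq_apply_one (g := fun B ↦ f B - frakS B)
      (fun n B hB ↦ by simp only [hfT n B hB, frakS_Tmat_zpow_two_mul_mul])
      (fun B hB ↦ by linarith [hfS B hB, frakS_sub_frakS_Smat_mul hB])
  rw [hf1, frakS_one] at hdiff
  linarith
end
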